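/- Let G be a finitely generated fully residually free group and let G₁, G₂ be finitely generated non-abelian subgroups of G such that H = G₁ ∩ G₂ has finite index in both G₁ and G₂. Then for every g in the subgroup ⟨G₁, G₂⟩ generated by G₁ and G₂, and for each j ∈ {1,2}, the intersection G_j ∩ gHg⁻¹ is non-abelian. -/

import Mathlib

/-!
Since `H = G₁ ∩ G₂` is commensurable with `G₁` and `G₂`, both lie in the commensurator of `H`,
hence so does `g`; thus `gHg⁻¹` has finite index in each `Gⱼ`. It remains to see that in a fully
residually free group a finite-index subgroup of a non-abelian subgroup `K` is non-abelian: send a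
non-trivial commutator of `K` to a free group. The image of `K` is free (Nielsen–Schreier) and
non-abelian, so it has two distinct basis elements `u, v`; some powers `uᵖ, v^q` lie in the image
of the finite-index subgroup, and they do not commute, as their images `Tᵖ` and `S T^q S⁻¹` in
`SL(2, ℤ)` show.
-/

open Pointwise

/-- A group `G` is fully residually free if for every finite set of nontrivial
elements there is a homomorphism to a free group not killing any of them. -/
def IsFullyResiduallyFree (G : Type*) [Group G] : Prop :=
  ∀ s : Finset G, (∀ g ∈ s, g ≠ 1) →
    ∃ (ι : Type) (φ : G →* FreeGroup ι), ∀ g ∈ s, φ g ≠ 1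

open scoped commutatorElement MatrixGroups

namespace ModularGroup

open Matrix.SpecialLinearGroup

theorem not_commute_T_pow_conj_S {p q : ℕ} (hp : p ≠ 0) (hq : q ≠ 0) :
    ¬Commute (T ^ p) (S * T ^ q * S⁻¹) := by
  intro h
  -- the top-left entries of the two products are `1 - p * q` and `1`
  have hpq : p = 0 ∨ q = 0 := by
    simpa [← zpow_natCast, coe_T_zpow, coe_inv, Matrix.adjugate_fin_two] using
      congrArg (fun M : SL(2, ℤ) => (M : Matrix (Fin 2) (Fin 2) ℤ) 0 0) h.eq
  exact hpq.elim hp hq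

end ModularGroup

namespace IsFreeGroup

variable {W : Type*} [Group W] [IsFreeGroup W]

theorem commute_of_forall_commute_of {x : W} (h : ∀ a, Commute x (of a)) (y : W) :
    Commute x y := by
  have hconj : (MulAut.conj x).toMonoidHom = MonoidHom.id W :=
    ext_hom fun a => by simpa [mul_inv_eq_iff_eq_mul] using (h a).eq
  show x * y = y * x
  simpa [mul_inv_eq_iff_eq_mul] using DFunLike.congr_fun hconj y

theorem commute_of_subsingleton_generators [Subsingleton (Generators W)] (x y : W) :
    Commute x y :=
  commute_of_forall_commute_of (fun a => (commute_of_forall_commute_of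
    (fun b => by rw [Subsingleton.elim a b]) x).symm) y

theorem not_commute_of_pow_of_pow {u v : Generators W} (huv : u ≠ v) {p q : ℕ} (hp : p ≠ 0)
    (hq : q ≠ 0) : ¬Commute (of u ^ p) (of v ^ q) := by
  classical
  open ModularGroup in
  let f : W →* SL(2, ℤ) := lift fun w => if w = u then T else S * T * S⁻¹
  intro h
  have hf := h.map f
  simp only [map_pow, f, lift_of, if_pos, if_neg huv.symm, conj_pow] at hf
  exact ModularGroup.not_commute_T_pow_conj_S hp hq hf

theorem commute_of_index_ne_zero {B : Subgroup W} (hB : B.index ≠ 0)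
    (hcomm : ∀ x ∈ B, ∀ y ∈ B, Commute x y) (x y : W) : Commute x y := by
  by_cases h : Subsingleton (Generators W)
  · exact commute_of_subsingleton_generators x y
  obtain ⟨u, v, huv⟩ := (not_subsingleton_iff_nontrivial.mp h).exists_pair_ne
  obtain ⟨p, hp, -, hpB⟩ := B.exists_pow_mem_of_index_ne_zero hB (of u)
  obtain ⟨q, hq, -, hqB⟩ := B.exists_pow_mem_of_index_ne_zero hB (of v)
  exact absurd (hcomm _ hpB _ hqB) (not_commute_of_pow_of_pow huv hp.ne' hq.ne')

end IsFreeGroup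

namespace Subgroup

variable {G : Type*} [Group G] {H K : Subgroup G}

theorem commensurable_of_le_of_relIndex_ne_zero (hHK : H ≤ K) (h : H.relIndex K ≠ 0) :
    Commensurable H K :=
  ⟨h, by simp [relIndex_eq_one.mpr hHK]⟩

theorem Commensurable.le_commensurator (h : Commensurable H K) :
    K ≤ Commensurable.commensurator H := by
  intro x hx
  have hxK : ConjAct.toConjAct x • K = K := conjAct_pointwise_smul_eq_self (le_normalizer hx)
  have hconj := h.conj (ConjAct.toConjAct x)
  rw [hxK] at hconj
  exact hconj.trans h.symm

end Subgroup

theorem IsFullyResiduallyFree.exists_not_commute_of_relIndex_ne_zero {G : Type*} [Group G]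
    (hG : IsFullyResiduallyFree G) {K B : Subgroup G} (hB : B.relIndex K ≠ 0)
    (hK : ∃ a b : G, a ∈ K ∧ b ∈ K ∧ a * b ≠ b * a) :
    ∃ a b : G, a ∈ K ⊓ B ∧ b ∈ K ⊓ B ∧ a * b ≠ b * a := by
  obtain ⟨a, b, ha, hb, hab⟩ := hK
  by_contra! hcomm
  obtain ⟨ι, φ, hφ⟩ := hG {⁅a, b⁆} (by simpa [commutatorElement_eq_one_iff_mul_comm] using hab)
  let ψ := φ.subgroupMap K
  have hidx : ((B.subgroupOf K).map ψ).index ≠ 0 :=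
    ne_zero_of_dvd_ne_zero hB
      (Subgroup.index_map_dvd (H := B.subgroupOf K) (φ.subgroupMap_surjective K))
  have himage : ∀ x ∈ (B.subgroupOf K).map ψ, ∀ y ∈ (B.subgroupOf K).map ψ, Commute x y := by
    rintro _ ⟨x, hx, rfl⟩ _ ⟨y, hy, rfl⟩
    exact Commute.map (Subtype.ext (hcomm x y ⟨x.2, hx⟩ ⟨y.2, hy⟩)) ψ
  -- `K.map φ` is free by Nielsen–Schreier (`subgroupIsFreeOfIsFree`).
  have hψ := IsFreeGroup.commute_of_index_ne_zero hidx himage (ψ ⟨a, ha⟩) (ψ ⟨b, hb⟩)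
  refine hφ _ (Finset.mem_singleton_self _) ?_
  rw [map_commutatorElement, commutatorElement_eq_one_iff_mul_comm]
  exact congrArg Subtype.val hψ.eq

theorem conj_intersection_nonabelian_general
    {G : Type*} [Group G] (hfrf : IsFullyResiduallyFree G)
    (G₁ G₂ : Subgroup G)
    (hna₁ : ∃ a b : G, a ∈ G₁ ∧ b ∈ G₁ ∧ a * b ≠ b * a)
    (hna₂ : ∃ a b : G, a ∈ G₂ ∧ b ∈ G₂ ∧ a * b ≠ b * a)
    (h1 : (G₁ ⊓ G₂).relIndex G₁ ≠ 0) (h2 : (G₁ ⊓ G₂).relIndex G₂ ≠ 0) :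
    ∀ g ∈ G₁ ⊔ G₂,
      (∃ a b : G, a ∈ G₁ ⊓ ConjAct.toConjAct g • (G₁ ⊓ G₂) ∧
        b ∈ G₁ ⊓ ConjAct.toConjAct g • (G₁ ⊓ G₂) ∧ a * b ≠ b * a) ∧
      (∃ a b : G, a ∈ G₂ ⊓ ConjAct.toConjAct g • (G₁ ⊓ G₂) ∧
        b ∈ G₂ ⊓ ConjAct.toConjAct g • (G₁ ⊓ G₂) ∧ a * b ≠ b * a) := by
  intro g hg
  have hc₁ := Subgroup.commensurable_of_le_of_relIndex_ne_zero inf_le_left h1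
  have hc₂ := Subgroup.commensurable_of_le_of_relIndex_ne_zero inf_le_right h2
  have hgH : (ConjAct.toConjAct g • (G₁ ⊓ G₂)).Commensurable (G₁ ⊓ G₂) :=
    sup_le hc₁.le_commensurator hc₂.le_commensurator hg
  exact ⟨hfrf.exists_not_commute_of_relIndex_ne_zero (hgH.trans hc₁).1 hna₁,
    hfrf.exists_not_commute_of_relIndex_ne_zero (hgH.trans hc₂).1 hna₂⟩

theorem conj_intersection_nonabelian
    {G : Type*} [Group G] (hG : Group.FG G) (hfrf : IsFullyResiduallyFree G)
    (G₁ G₂ : Subgroup G) (hG₁ : G₁.FG) (hG₂ : G₂.FG)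
    (hna₁ : ∃ a b : G, a ∈ G₁ ∧ b ∈ G₁ ∧ a * b ≠ b * a)
    (hna₂ : ∃ a b : G, a ∈ G₂ ∧ b ∈ G₂ ∧ a * b ≠ b * a)
    (h1 : (G₁ ⊓ G₂).relIndex G₁ ≠ 0) (h2 : (G₁ ⊓ G₂).relIndex G₂ ≠ 0) :
    ∀ g ∈ G₁ ⊔ G₂,
      (∃ a b : G, a ∈ G₁ ⊓ ConjAct.toConjAct g • (G₁ ⊓ G₂) ∧
        b ∈ G₁ ⊓ ConjAct.toConjAct g • (G₁ ⊓ G₂) ∧ a * b ≠ b * a) ∧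
      (∃ a b : G, a ∈ G₂ ⊓ ConjAct.toConjAct g • (G₁ ⊓ G₂) ∧
        b ∈ G₂ ⊓ ConjAct.toConjAct g • (G₁ ⊓ G₂) ∧ a * b ≠ b * a) :=
  conj_intersection_nonabelian_general hfrf G₁ G₂ hna₁ hna₂ h1 h2
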